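/- For z = a + ib ∈ ℂ with |z| < 1, define f(z) = −ab/√(1 − b²) + i·√(1 − b²) and c(z) = √(2 − |z|² − |f(z)|²). If z, u ∈ ℂ and v ∈ ℝ satisfy |z| < 1, |u| < 1, Im(u) > 0, v > 0, |z|² + |u|² + v² = 2, and z² + u² + v² = 0, then u = f(z) and v = c(z). -/

import Mathlib

/-- The auxiliary function `f` of Proposition 6.4: for `z = a + ib` in the open unit
disk, `f(z) = −ab/√(1 − b²) + i·√(1 − b²)`. -/
noncomputable def auxf (z : ℂ) : ℂ :=
  ((-(z.re * z.im) / Real.sqrt (1 - z.im ^ 2) : ℝ) : ℂ) +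
    ((Real.sqrt (1 - z.im ^ 2) : ℝ) : ℂ) * Complex.I

/-- The auxiliary function `c` of Proposition 6.4:
`c(z) = √(2 − |z|² − |f(z)|²)`. -/
noncomputable def auxc (z : ℂ) : ℝ :=
  Real.sqrt (2 - ‖z‖ ^ 2 - ‖auxf z‖ ^ 2)

/-!
Subtracting the real part of `z² + u² + v² = 0` from `|z|² + |u|² + v² = 2` gives
`(Im z)² + (Im u)² = 1`, which determines `Im u > 0`; the imaginary part
`Re z Im z + Re u Im u = 0` then determines `Re u`, and the norm equation determines `v > 0`.
-/

namespace Complex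

theorem im_sq_add_im_sq_eq_one_of_quadric {z u : ℂ} {v : ℝ}
    (hnorm : ‖z‖ ^ 2 + ‖u‖ ^ 2 + v ^ 2 = 2) (hquad : z ^ 2 + u ^ 2 + (v : ℂ) ^ 2 = 0) :
    z.im ^ 2 + u.im ^ 2 = 1 := by
  have hre := congrArg re hquad
  simp only [add_re, sq, mul_re, ofReal_re, ofReal_im, zero_re] at hre
  rw [Complex.sq_norm, Complex.sq_norm, normSq_apply, normSq_apply] at hnorm
  linarith

theorem re_mul_im_add_re_mul_im_eq_zero_of_quadric {z u : ℂ} {v : ℝ}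
    (hquad : z ^ 2 + u ^ 2 + (v : ℂ) ^ 2 = 0) : z.re * z.im + u.re * u.im = 0 := by
  have him := congrArg im hquad
  simp only [add_im, ofReal_im, sq, mul_im, zero_im] at him
  linarith

end Complex

open Complex

theorem eq_auxf_of_im_pos {z u : ℂ} (hu : 0 < u.im) (hsq : z.im ^ 2 + u.im ^ 2 = 1)
    (hmul : z.re * z.im + u.re * u.im = 0) : u = auxf z := by
  have him : u.im = √(1 - z.im ^ 2) := by
    rw [← Real.sqrt_sq hu.le]
    congr 1
    linarith
  have hre : u.re = -(z.re * z.im) / √(1 - z.im ^ 2) := by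
    rw [← him, eq_div_iff hu.ne']
    linarith
  apply Complex.ext <;> simp [auxf, hre, him]

theorem auxf_auxc_unique_general (z u : ℂ) (v : ℝ)
    (huim : 0 < u.im) (hv : 0 < v)
    (hnorm : ‖z‖ ^ 2 + ‖u‖ ^ 2 + v ^ 2 = 2)
    (hquad : z ^ 2 + u ^ 2 + ((v : ℝ) : ℂ) ^ 2 = 0) :
    u = auxf z ∧ v = auxc z := by
  have hu : u = auxf z := eq_auxf_of_im_pos huim (im_sq_add_im_sq_eq_one_of_quadric hnorm hquad)
    (re_mul_im_add_re_mul_im_eq_zero_of_quadric hquad)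
  refine ⟨hu, ?_⟩
  have hv2 : 2 - ‖z‖ ^ 2 - ‖auxf z‖ ^ 2 = v ^ 2 := by
    rw [← hu]
    linarith
  rw [auxc, hv2, Real.sqrt_sq hv.le]

/-- The uniqueness statement preceding Proposition 6.4: if `|z| < 1`, `|u| < 1`,
`Im u > 0`, `v > 0`, `|z|² + |u|² + v² = 2` and `z² + u² + v² = 0`, then `u = f(z)` and
`v = c(z)`. -/
theorem auxf_auxc_unique (z u : ℂ) (v : ℝ)
    (hz : ‖z‖ < 1) (hu : ‖u‖ < 1) (huim : 0 < u.im) (hv : 0 < v)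
    (hnorm : ‖z‖ ^ 2 + ‖u‖ ^ 2 + v ^ 2 = 2)
    (hquad : z ^ 2 + u ^ 2 + ((v : ℝ) : ℂ) ^ 2 = 0) :
    u = auxf z ∧ v = auxc z :=
  auxf_auxc_unique_general z u v huim hv hnorm hquad
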